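/- For every minimizer ω̂_j of the relaxed objective g and every minimizer π̂ of the partially penalized objective f(b) = (2n)^{-1} ‖x_j − ∑_{k≠j} b_k x_k‖₂² + λ_j ∑_{k∈Ŝᶜ∖{j}} v_{jk} |b_k| over b ∈ ℝ^{{1,…,p}∖{j}}, the two residual vectors coincide: x_j − ∑_{k≠j} π̂_k x_k = ψ_j^{(j)} − ∑_{k∈Ŝᶜ∖{j}} (ω̂_j)_k ψ_k^{(j)} = z_j. In particular, the hybrid orthogonalization vector z_j does not depend on the choice of minimizer of either problem. -/

import Mathlib

/-!
Write `A = Ŝ∖{j}`, `B = Ŝᶜ∖{j}`, `P = P_A` and `y(b) = x_j − ∑_{k∈B} b_k x_k`, so that the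
residual of `g` is `z(b) = (I − P) y(b)`. Since `(I − P) y` is orthogonal to the columns of
`X_A`, Pythagoras gives `f(b) = g(b) + (2n)⁻¹ ‖P y(b) − X_A b_A‖²`. Hence `g ≤ f`, and every
value of `g` is attained by `f` (choose `b_A` with `X_A b_A = P y(b)`), so a minimizer `π̂` of
`f` minimizes `g` and satisfies `f(π̂) = g(π̂)`; the latter forces `X_A π̂_A = P y(π̂)`, i.e. the
residual of `f` at `π̂` is `z(π̂)`. Finally `g` is a strictly convex function of the affine map
`b ↦ z(b)` plus a convex penalty, so all its minimizers share the same `z`.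
-/

noncomputable section

open Finset Matrix

namespace HOT

variable {n p : ℕ}

/-- `k`-th column of `X`. -/
def col (X : Matrix (Fin n) (Fin p) ℝ) (k : Fin p) : Fin n → ℝ := fun i => X i k

/-- Submatrix of `X` consisting of the columns indexed by `S`. -/
def sub (X : Matrix (Fin n) (Fin p) ℝ) (S : Finset (Fin p)) : Matrix (Fin n) ↥S ℝ :=
  Matrix.of fun i k => X i (k : Fin p)

/-- Gram matrix `X_Sᵀ X_S`. -/
def gram (X : Matrix (Fin n) (Fin p) ℝ) (S : Finset (Fin p)) : Matrix ↥S ↥S ℝ :=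
  (sub X S)ᵀ * sub X S

/-- Orthogonal projection `P_S = X_S (X_Sᵀ X_S)⁻¹ X_Sᵀ` onto the column space of `X_S`. -/
def proj (X : Matrix (Fin n) (Fin p) ℝ) (S : Finset (Fin p)) : Matrix (Fin n) (Fin n) ℝ :=
  sub X S * (gram X S)⁻¹ * (sub X S)ᵀ

/-- `ψ_k^{(j)} = (I_n − P_{Ŝ∖{j}}) x_k`. -/
def psi (X : Matrix (Fin n) (Fin p) ℝ) (S : Finset (Fin p)) (j k : Fin p) : Fin n → ℝ :=
  col X k - (proj X (S.erase j)).mulVec (col X k)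

/-- `v_{jk} = ‖ψ_k^{(j)}‖₂ / √n`. -/
def v (X : Matrix (Fin n) (Fin p) ℝ) (S : Finset (Fin p)) (j k : Fin p) : ℝ :=
  Real.sqrt (∑ i, (psi X S j k i) ^ 2) / Real.sqrt n

/-- The relaxed-orthogonalization objective
`g(b) = (2n)⁻¹ ‖ψ_j^{(j)} − ∑_{k∈Ŝᶜ∖{j}} b_k ψ_k^{(j)}‖₂² + λ_j ∑_{k∈Ŝᶜ∖{j}} v_{jk} |b_k|`. -/
def gObj (X : Matrix (Fin n) (Fin p) ℝ) (S : Finset (Fin p)) (j : Fin p) (lam : ℝ)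
    (b : Fin p → ℝ) : ℝ :=
  (2 * n : ℝ)⁻¹ * ∑ i, (psi X S j j i - ∑ k ∈ Sᶜ.erase j, b k * psi X S j k i) ^ 2
    + lam * ∑ k ∈ Sᶜ.erase j, v X S j k * |b k|

/-- The partially penalized objective
`f(b) = (2n)⁻¹ ‖x_j − ∑_{k≠j} b_k x_k‖₂² + λ_j ∑_{k∈Ŝᶜ∖{j}} v_{jk} |b_k|`. -/
def fObj (X : Matrix (Fin n) (Fin p) ℝ) (S : Finset (Fin p)) (j : Fin p) (lam : ℝ)
    (b : Fin p → ℝ) : ℝ :=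
  (2 * n : ℝ)⁻¹ * ∑ i, (col X j i - ∑ k ∈ Finset.univ.erase j, b k * col X k i) ^ 2
    + lam * ∑ k ∈ Sᶜ.erase j, v X S j k * |b k|

/-- The hybrid orthogonalization vector `z_j = ψ_j^{(j)} − ∑_{k∈Ŝᶜ∖{j}} ω̂_k ψ_k^{(j)}`. -/
def zvec (X : Matrix (Fin n) (Fin p) ℝ) (S : Finset (Fin p)) (j : Fin p)
    (ωhat : Fin p → ℝ) : Fin n → ℝ :=
  fun i => psi X S j j i - ∑ k ∈ Sᶜ.erase j, ωhat k * psi X S j k i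

lemma _root_.StrictConvexOn.const_mul {E : Type*} [AddCommMonoid E] [SMul ℝ E] {s : Set E}
    {f : E → ℝ} {c : ℝ} (hc : 0 < c) (hf : StrictConvexOn ℝ s f) :
    StrictConvexOn ℝ s fun x => c * f x := by
  refine ⟨hf.1, fun x hx y hy hxy a b ha hb hab => ?_⟩
  have h := mul_lt_mul_of_pos_left (hf.2 hx hy hxy ha hb hab) hc
  simp only [smul_eq_mul] at h ⊢
  linarith

lemma strictConvexOn_dotProduct_self {ι : Type*} [Fintype ι] :
    StrictConvexOn ℝ Set.univ fun w : ι → ℝ => w ⬝ᵥ w := by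
  refine ⟨convex_univ, fun x _ y _ hxy a b ha hb hab => ?_⟩
  obtain ⟨i, hi⟩ := Function.ne_iff.mp hxy
  have hsq := Even.strictConvexOn_pow (n := 2) even_two two_ne_zero
  simp only [dotProduct, ← sq, Pi.add_apply, Pi.smul_apply, smul_eq_mul, mul_sum,
    ← sum_add_distrib]
  exact sum_lt_sum (fun k _ => hsq.convexOn.2 trivial trivial ha.le hb.le hab)
    ⟨i, mem_univ i, hsq.2 trivial trivial hi ha hb hab⟩

lemma convexOn_sum_mul_abs {ι : Type*} {t : Finset ι} {w : ι → ℝ} (hw : ∀ k ∈ t, 0 ≤ w k) :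
    ConvexOn ℝ Set.univ fun b : ι → ℝ => ∑ k ∈ t, w k * |b k| := by
  refine ⟨convex_univ, fun x _ y _ a b ha hb hab => ?_⟩
  simp only [Pi.add_apply, Pi.smul_apply, smul_eq_mul, mul_sum, ← sum_add_distrib]
  refine sum_le_sum fun k hk => ?_
  have habs : |a * x k + b * y k| ≤ a * |x k| + b * |y k| := by
    simpa [abs_mul, abs_of_nonneg ha, abs_of_nonneg hb] using abs_add_le (a * x k) (b * y k)
  nlinarith [hw k hk]

lemma _root_.StrictConvexOn.apply_eq_of_isMinOn_comp_add {E F : Type*} [AddCommGroup E]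
    [Module ℝ E] [AddCommGroup F] [Module ℝ F] {h : F → ℝ} (hh : StrictConvexOn ℝ Set.univ h)
    (L : E →ᵃ[ℝ] F) {φ : E → ℝ} (hφ : ConvexOn ℝ Set.univ φ) {x y : E}
    (hx : IsMinOn (fun b => h (L b) + φ b) Set.univ x)
    (hy : IsMinOn (fun b => h (L b) + φ b) Set.univ y) : L x = L y := by
  by_contra hne
  set m := (2 : ℝ)⁻¹ • x + (2 : ℝ)⁻¹ • y
  have hhalf : (2 : ℝ)⁻¹ + 2⁻¹ = 1 := by norm_num
  have hLm : h (L m) < 2⁻¹ * h (L x) + 2⁻¹ * h (L y) := by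
    rw [Convex.combo_affine_apply hhalf]
    exact hh.2 trivial trivial hne (by norm_num) (by norm_num) hhalf
  have hφm : φ m ≤ 2⁻¹ * φ x + 2⁻¹ * φ y :=
    hφ.2 trivial trivial (by norm_num) (by norm_num) hhalf
  have hxm : h (L x) + φ x ≤ h (L m) + φ m := hx (Set.mem_univ m)
  have hym : h (L y) + φ y ≤ h (L m) + φ m := hy (Set.mem_univ m)
  linarith

lemma isMinOn_and_eq_of_le_of_forall_exists_le {α β : Type*} [PartialOrder β] {f g : α → β}
    (hgf : ∀ b, g b ≤ f b) (hfg : ∀ c, ∃ b, f b ≤ g c) {x : α} (hx : IsMinOn f Set.univ x) :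
    IsMinOn g Set.univ x ∧ f x = g x := by
  have hfx : ∀ c, f x ≤ g c := fun c =>
    let ⟨b, hb⟩ := hfg c
    (hx (Set.mem_univ b)).trans hb
  exact ⟨fun c _ => (hgf x).trans (hfx c), le_antisymm (hfx x) (hgf x)⟩

section Projection

variable {X : Matrix (Fin n) (Fin p) ℝ} {T : Finset (Fin p)}

lemma gram_transpose : (gram X T)ᵀ = gram X T := by
  simp [gram, transpose_mul]

lemma proj_transpose : (proj X T)ᵀ = proj X T := by
  simp only [proj, transpose_mul, transpose_transpose, transpose_nonsing_inv, gram_transpose,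
    Matrix.mul_assoc]

lemma proj_mul_sub (hG : IsUnit (gram X T)) : proj X T * sub X T = sub X T := by
  rw [proj, Matrix.mul_assoc, Matrix.mul_assoc, ← gram,
    nonsing_inv_mul _ ((isUnit_iff_isUnit_det _).mp hG), Matrix.mul_one]

lemma transpose_sub_mul_proj (hG : IsUnit (gram X T)) : (sub X T)ᵀ * proj X T = (sub X T)ᵀ := by
  simpa [transpose_mul, proj_transpose] using congrArg transpose (proj_mul_sub hG)

lemma proj_mulVec_eq_sub_mulVec (y : Fin n → ℝ) :
    proj X T *ᵥ y = sub X T *ᵥ (((gram X T)⁻¹ * (sub X T)ᵀ) *ᵥ y) := by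
  rw [mulVec_mulVec, proj, Matrix.mul_assoc]

lemma sub_proj_mulVec_dotProduct_sub_mulVec_eq_zero (hG : IsUnit (gram X T)) (y : Fin n → ℝ)
    (a : T → ℝ) :
    (y - proj X T *ᵥ y) ⬝ᵥ (sub X T *ᵥ a) = 0 := by
  rw [dotProduct_mulVec, ← mulVec_transpose, mulVec_sub, mulVec_mulVec,
    transpose_sub_mul_proj hG, sub_self, zero_dotProduct]

lemma sub_mulVec_dotProduct_self_eq_add (hG : IsUnit (gram X T)) (y : Fin n → ℝ) (a : T → ℝ) :
    (y - sub X T *ᵥ a) ⬝ᵥ (y - sub X T *ᵥ a)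
      = (y - proj X T *ᵥ y) ⬝ᵥ (y - proj X T *ᵥ y)
        + (proj X T *ᵥ y - sub X T *ᵥ a) ⬝ᵥ (proj X T *ᵥ y - sub X T *ᵥ a) := by
  set r := y - proj X T *ᵥ y
  set w := proj X T *ᵥ y - sub X T *ᵥ a
  have hrw : r ⬝ᵥ w = 0 := by
    rw [show w = sub X T *ᵥ (((gram X T)⁻¹ * (sub X T)ᵀ) *ᵥ y - a) by
      rw [mulVec_sub, ← proj_mulVec_eq_sub_mulVec]]
    exact sub_proj_mulVec_dotProduct_sub_mulVec_eq_zero hG y _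
  have hsplit : y - sub X T *ᵥ a = r + w := (sub_add_sub_cancel _ _ _).symm
  rw [hsplit, add_dotProduct, dotProduct_add, dotProduct_add, dotProduct_comm w r, hrw]
  ring

lemma sub_mulVec_restrict (b : Fin p → ℝ) : sub X T *ᵥ T.restrict b = ∑ k ∈ T, b k • col X k := by
  ext i
  simp only [mulVec, dotProduct, sub, of_apply, Finset.restrict, Finset.sum_apply, Pi.smul_apply,
    smul_eq_mul, col, mul_comm (X i _)]
  exact sum_coe_sort T fun k => b k * X i k

end Projection

section Residuals

variable (X : Matrix (Fin n) (Fin p) ℝ) (S : Finset (Fin p)) (j : Fin p)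

def residual (b : Fin p → ℝ) : Fin n → ℝ :=
  fun i => col X j i - ∑ k ∈ Finset.univ.erase j, b k * col X k i

def partialResidual (b : Fin p → ℝ) : Fin n → ℝ :=
  col X j - ∑ k ∈ Sᶜ.erase j, b k • col X k

def penalty (b : Fin p → ℝ) : ℝ :=
  ∑ k ∈ Sᶜ.erase j, v X S j k * |b k|

def zvecAffineMap : (Fin p → ℝ) →ᵃ[ℝ] (Fin n → ℝ) where
  toFun := zvec X S j
  linear := -∑ k ∈ Sᶜ.erase j, (LinearMap.proj k).smulRight (psi X S j k)
  map_vadd' b c := by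
    ext i
    simp only [zvec, Pi.vadd_apply', vadd_eq_add, add_mul, sum_add_distrib, LinearMap.neg_apply,
      LinearMap.coe_sum, LinearMap.coe_smulRight, LinearMap.coe_proj, Function.eval,
      Finset.sum_apply, Pi.neg_apply, Pi.smul_apply, smul_eq_mul]
    ring

lemma v_nonneg (k : Fin p) : 0 ≤ v X S j k :=
  div_nonneg (Real.sqrt_nonneg _) (Real.sqrt_nonneg _)

lemma zvec_eq_sub_proj_mulVec (b : Fin p → ℝ) :
    zvec X S j b
      = partialResidual X S j b - proj X (S.erase j) *ᵥ partialResidual X S j b := by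
  have hz : zvec X S j b = psi X S j j - ∑ k ∈ Sᶜ.erase j, b k • psi X S j k := by
    ext i
    simp [zvec, Finset.sum_apply]
  rw [hz, partialResidual, mulVec_sub, mulVec_sum]
  simp only [psi, mulVec_smul, smul_sub, sum_sub_distrib]
  abel

lemma residual_eq_partialResidual_sub (b : Fin p → ℝ) :
    residual X j b
      = partialResidual X S j b - sub X (S.erase j) *ᵥ (S.erase j).restrict b := by
  have hsplit : Finset.univ.erase j = S.erase j ∪ Sᶜ.erase j := by
    rw [← erase_union_distrib, union_compl]
  have hdisj : Disjoint (S.erase j) (Sᶜ.erase j) :=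
    disjoint_compl_right.mono (erase_subset j S) (erase_subset j Sᶜ)
  rw [sub_mulVec_restrict]
  ext i
  simp only [residual, partialResidual, hsplit, sum_union hdisj, Pi.sub_apply, Finset.sum_apply,
    Pi.smul_apply, smul_eq_mul]
  ring

variable {S j} (lam : ℝ)

lemma gObj_eq (b : Fin p → ℝ) :
    gObj X S j lam b
      = (2 * n : ℝ)⁻¹ * (zvec X S j b ⬝ᵥ zvec X S j b) + lam * penalty X S j b := by
  simp only [gObj, zvec, dotProduct, sq, penalty]

lemma fObj_eq (b : Fin p → ℝ) :
    fObj X S j lam b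
      = (2 * n : ℝ)⁻¹ * (residual X j b ⬝ᵥ residual X j b) + lam * penalty X S j b := by
  simp only [fObj, residual, dotProduct, sq, penalty]

variable {X}

lemma fObj_eq_gObj_add (hG : IsUnit (gram X (S.erase j))) (b : Fin p → ℝ) :
    fObj X S j lam b = gObj X S j lam b
      + (2 * n : ℝ)⁻¹ * ((proj X (S.erase j) *ᵥ partialResidual X S j b
          - sub X (S.erase j) *ᵥ (S.erase j).restrict b)
        ⬝ᵥ (proj X (S.erase j) *ᵥ partialResidual X S j b
          - sub X (S.erase j) *ᵥ (S.erase j).restrict b)) := by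
  rw [fObj_eq, gObj_eq, residual_eq_partialResidual_sub X S,
    sub_mulVec_dotProduct_self_eq_add hG, ← zvec_eq_sub_proj_mulVec]
  ring

lemma gObj_le_fObj (hG : IsUnit (gram X (S.erase j))) (b : Fin p → ℝ) :
    gObj X S j lam b ≤ fObj X S j lam b := by
  rw [fObj_eq_gObj_add lam hG]
  exact le_add_of_nonneg_right <|
    mul_nonneg (by positivity) (Fintype.sum_nonneg fun i => mul_self_nonneg _)

lemma exists_fObj_eq_gObj (hG : IsUnit (gram X (S.erase j))) (c : Fin p → ℝ) :
    ∃ b, fObj X S j lam b = gObj X S j lam c := by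
  set coef := ((gram X (S.erase j))⁻¹ * (sub X (S.erase j))ᵀ) *ᵥ partialResidual X S j c
  set b : Fin p → ℝ := fun k => if h : k ∈ S.erase j then coef ⟨k, h⟩ else c k
  have hbc : ∀ k ∈ Sᶜ.erase j, b k = c k := fun k hk =>
    dif_neg fun hk' => mem_compl.mp (mem_of_mem_erase hk) (mem_of_mem_erase hk')
  have hres : partialResidual X S j b = partialResidual X S j c := by
    rw [partialResidual, partialResidual, sum_congr rfl fun k hk => by rw [hbc k hk]]
  have hpen : penalty X S j b = penalty X S j c := by
    rw [penalty, penalty, sum_congr rfl fun k hk => by rw [hbc k hk]]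
  have hcoef : (S.erase j).restrict b = coef := funext fun k => dif_pos k.2
  refine ⟨b, ?_⟩
  rw [fObj_eq_gObj_add lam hG, hres, hcoef, ← proj_mulVec_eq_sub_mulVec, sub_self,
    dotProduct_zero, mul_zero, add_zero, gObj_eq, gObj_eq, zvec_eq_sub_proj_mulVec,
    zvec_eq_sub_proj_mulVec, hres, hpen]

lemma residual_eq_zvec_of_fObj_eq_gObj (hn : 0 < n) (hG : IsUnit (gram X (S.erase j)))
    {b : Fin p → ℝ} (h : fObj X S j lam b = gObj X S j lam b) :
    residual X j b = zvec X S j b := by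
  rw [fObj_eq_gObj_add lam hG, add_eq_left, mul_eq_zero, dotProduct_self_eq_zero,
    sub_eq_zero] at h
  rw [residual_eq_partialResidual_sub X S, zvec_eq_sub_proj_mulVec,
    h.resolve_left (by positivity)]

lemma zvec_eq_of_isMinOn (hn : 0 < n) {lam : ℝ} (hlam : 0 ≤ lam) {x y : Fin p → ℝ}
    (hx : IsMinOn (gObj X S j lam) Set.univ x) (hy : IsMinOn (gObj X S j lam) Set.univ y) :
    zvec X S j x = zvec X S j y := by
  have hg : gObj X S j lam = fun b => (2 * n : ℝ)⁻¹ *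
      (zvecAffineMap X S j b ⬝ᵥ zvecAffineMap X S j b) + lam * penalty X S j b :=
    funext (gObj_eq X lam)
  rw [hg] at hx hy
  exact (strictConvexOn_dotProduct_self.const_mul (by positivity)).apply_eq_of_isMinOn_comp_add
    (zvecAffineMap X S j) ((convexOn_sum_mul_abs fun k _ => v_nonneg X S j k).smul hlam) hx hy

end Residuals

theorem residuals_coincide (hn : 0 < n)
    (X : Matrix (Fin n) (Fin p) ℝ) (j : Fin p) (S : Finset (Fin p))
    (hG : IsUnit (gram X (S.erase j)))
    (lam : ℝ) (hlam : 0 < lam)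
    (ωhat : Fin p → ℝ) (hω : ∀ b : Fin p → ℝ, gObj X S j lam ωhat ≤ gObj X S j lam b)
    (πhat : Fin p → ℝ) (hπ : ∀ b : Fin p → ℝ, fObj X S j lam πhat ≤ fObj X S j lam b) :
    (fun i => col X j i - ∑ k ∈ Finset.univ.erase j, πhat k * col X k i)
      = zvec X S j ωhat := by
  obtain ⟨hπg, hfg⟩ := isMinOn_and_eq_of_le_of_forall_exists_le (gObj_le_fObj lam hG)
    (fun c => (exists_fObj_eq_gObj lam hG c).imp fun _ => le_of_eq) (isMinOn_univ_iff.mpr hπ)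
  change residual X j πhat = _
  rw [residual_eq_zvec_of_fObj_eq_gObj lam hn hG hfg]
  exact zvec_eq_of_isMinOn hn hlam.le hπg (isMinOn_univ_iff.mpr hω)

end HOT
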